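/- arXiv:0709.1708 — 11 statements merged into one kernel-verified Lean document; each statement's English description precedes it below -/
import Mathlib

section
/- For an odd prime p, the sum over k from 1 to p-1 of ((1+μ^k)(1+μ^{-k}))/((1-μ^k)(1-μ^{-k})), where μ = exp(2πi/p), equals (p-1)(p-2)/3. -/
/-!
Put `w = (1 - z)⁻¹` for `z = μ ^ k`. Then `(1 + z) / (1 - z) = 2 * w - 1` and
`(1 + z⁻¹) / (1 - z⁻¹) = -(2 * w - 1)`, so the summand is `-(2 * w - 1) ^ 2` and the sum only
involves the first two power sums of the `w_k`. These are logarithmic derivatives at `X = 1` of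
`Q = ∏ (X - μ ^ k) = 1 + X + ⋯ + X ^ (p - 1)`: `Q'(1) = Q(1) * ∑ w_k` and
`Q''(1) = Q(1) * ((∑ w_k) ^ 2 - ∑ w_k ^ 2)`, where `Q(1) = p`, `Q'(1) = p(p-1)/2` and
`Q''(1) = p(p-1)(p-2)/3`.
-/

open Finset

noncomputable def mu (p : ℕ) : ℂ := Complex.exp (2 * Real.pi * Complex.I / p)

noncomputable def Ipq (p : ℕ) (q : ℤ) : ℂ :=
  ∑ k ∈ Finset.Icc 1 (p - 1),
    ((1 + mu p ^ (k : ℤ)) * (1 + mu p ^ (q * k))) /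
      ((1 - mu p ^ (k : ℤ)) * (1 - mu p ^ (q * k)))

open Polynomial

namespace Polynomial

section LogDerivative

variable {K ι : Type*} [Field K] {s : Finset ι} {a : ι → K} {x : K}

theorem eval_derivative_prod_X_sub_C (hx : ∀ i ∈ s, x ≠ a i) :
    (derivative (∏ i ∈ s, (X - C (a i)))).eval x =
      (∏ i ∈ s, (X - C (a i))).eval x * ∑ i ∈ s, (x - a i)⁻¹ := by
  classical
  induction s using Finset.induction_on with
  | empty => simp
  | insert j s hj ih =>
    have hxj : x - a j ≠ 0 := sub_ne_zero.mpr (hx j (mem_insert_self j s))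
    rw [prod_insert hj, sum_insert hj, derivative_mul, eval_add, eval_mul, eval_mul, eval_mul,
      ih fun i hi ↦ hx i (mem_insert_of_mem hi)]
    simp only [derivative_sub, derivative_X, derivative_C, sub_zero, eval_one, eval_sub, eval_X,
      eval_C]
    field_simp

theorem eval_derivative_derivative_prod_X_sub_C (hx : ∀ i ∈ s, x ≠ a i) :
    (derivative (derivative (∏ i ∈ s, (X - C (a i))))).eval x =
      (∏ i ∈ s, (X - C (a i))).eval x *
        ((∑ i ∈ s, (x - a i)⁻¹) ^ 2 - ∑ i ∈ s, ((x - a i)⁻¹) ^ 2) := by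
  classical
  induction s using Finset.induction_on with
  | empty => simp
  | insert j s hj ih =>
    have hx' : ∀ i ∈ s, x ≠ a i := fun i hi ↦ hx i (mem_insert_of_mem hi)
    have hxj : x - a j ≠ 0 := sub_ne_zero.mpr (hx j (mem_insert_self j s))
    rw [prod_insert hj, sum_insert hj, sum_insert hj, derivative_mul, derivative_add,
      derivative_mul, derivative_mul]
    simp only [eval_add, eval_mul, ih hx', eval_derivative_prod_X_sub_C hx', derivative_sub,
      derivative_X, derivative_C, sub_zero, derivative_one, eval_one, eval_zero, eval_sub, eval_X,
      eval_C]
    field_simp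
    ring

end LogDerivative

section GeomSum

variable {K : Type*} [Field K] [CharZero K]

theorem eval_one_derivative_geom_sum (n : ℕ) :
    (derivative (∑ j ∈ range n, (X : K[X]) ^ j)).eval 1 = n * (n - 1) / 2 := by
  induction n with
  | zero => simp
  | succ n ih =>
    rw [sum_range_succ, derivative_add, eval_add, ih]
    simp only [derivative_X_pow, eval_mul, eval_C, eval_pow, eval_X, one_pow]
    push_cast
    ring

theorem eval_one_derivative_derivative_geom_sum (n : ℕ) :
    (derivative (derivative (∑ j ∈ range n, (X : K[X]) ^ j))).eval 1 =
      n * (n - 1) * (n - 2) / 3 := by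
  induction n with
  | zero => simp
  | succ n ih =>
    rw [sum_range_succ, derivative_add, derivative_add, eval_add, ih]
    rcases n with _ | n
    · simp
    · simp only [derivative_X_pow, derivative_mul, derivative_C, zero_mul, zero_add, eval_mul,
        eval_C, eval_pow, eval_X, one_pow, mul_one, Nat.add_sub_cancel]
      push_cast
      ring

end GeomSum

end Polynomial

theorem one_add_mul_one_add_inv_div {K : Type*} [Field K] {z : K} (h0 : z ≠ 0) (h1 : z ≠ 1) :
    (1 + z) * (1 + z⁻¹) / ((1 - z) * (1 - z⁻¹)) = -(2 * (1 - z)⁻¹ - 1) ^ 2 := by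
  have h1' : 1 - z ≠ 0 := sub_ne_zero.mpr h1.symm
  have h1'' : z - 1 ≠ 0 := sub_ne_zero.mpr h1
  field_simp
  ring

namespace IsPrimitiveRoot

theorem one_ne_pow {M : Type*} [CommMonoid M] {ζ : M} {n k : ℕ} (hζ : IsPrimitiveRoot ζ n)
    (hk : k ∈ Icc 1 (n - 1)) : 1 ≠ ζ ^ k := by
  rw [mem_Icc] at hk
  exact (hζ.pow_ne_one_of_pos_of_lt (by omega) (by omega)).symm

theorem prod_X_sub_C_pow_eq_geom_sum {R : Type*} [CommRing R] [IsDomain R] {ζ : R} {n : ℕ}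
    (hζ : IsPrimitiveRoot ζ n) (hn : n ≠ 0) :
    ∏ k ∈ Icc 1 (n - 1), (X - C (ζ ^ k)) = ∑ j ∈ range n, (X : R[X]) ^ j := by
  have hrange : range n = insert 0 (Icc 1 (n - 1)) := by
    ext k
    simp only [mem_range, mem_insert, mem_Icc]
    omega
  have hroots := X_pow_sub_C_eq_prod hζ (Nat.pos_of_ne_zero hn) (one_pow n)
  simp only [mul_one, map_one, hrange, prod_insert (by simp : 0 ∉ Icc 1 (n - 1)), pow_zero]
    at hroots
  refine mul_left_cancel₀ (X_sub_C_ne_zero (1 : R)) ?_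
  rw [map_one, ← hroots, mul_geom_sum]

variable {K : Type*} [Field K] [CharZero K] {ζ : K} {n : ℕ}

theorem sum_inv_one_sub_pow (hζ : IsPrimitiveRoot ζ n) (hn : n ≠ 0) :
    ∑ k ∈ Icc 1 (n - 1), (1 - ζ ^ k)⁻¹ = (n - 1) / 2 := by
  have h := eval_derivative_prod_X_sub_C (x := 1) fun k hk ↦ hζ.one_ne_pow hk
  rw [hζ.prod_X_sub_C_pow_eq_geom_sum hn, eval_one_derivative_geom_sum, eval_geom_sum,
    one_geom_sum] at h
  apply mul_left_cancel₀ (Nat.cast_ne_zero.mpr hn : (n : K) ≠ 0)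
  rw [← h]
  ring

theorem sum_inv_one_sub_pow_sq (hζ : IsPrimitiveRoot ζ n) (hn : n ≠ 0) :
    ∑ k ∈ Icc 1 (n - 1), ((1 - ζ ^ k)⁻¹) ^ 2 = -((n - 1) * (n - 5)) / 12 := by
  have h := eval_derivative_derivative_prod_X_sub_C (x := 1) fun k hk ↦ hζ.one_ne_pow hk
  rw [hζ.prod_X_sub_C_pow_eq_geom_sum hn, eval_one_derivative_derivative_geom_sum, eval_geom_sum,
    one_geom_sum, hζ.sum_inv_one_sub_pow hn] at h
  apply mul_left_cancel₀ (Nat.cast_ne_zero.mpr hn : (n : K) ≠ 0)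
  linear_combination h

theorem sum_one_add_mul_one_add_inv_div (hζ : IsPrimitiveRoot ζ n) (hn : n ≠ 0) :
    ∑ k ∈ Icc 1 (n - 1), (1 + ζ ^ k) * (1 + (ζ ^ k)⁻¹) / ((1 - ζ ^ k) * (1 - (ζ ^ k)⁻¹)) =
      (n - 1) * (n - 2) / 3 := by
  have hsummand (k : ℕ) (hk : k ∈ Icc 1 (n - 1)) :=
    one_add_mul_one_add_inv_div (pow_ne_zero k (hζ.ne_zero hn)) (hζ.one_ne_pow hk).symm
  have hexpand (w : K) : -(2 * w - 1) ^ 2 = 4 * w - 4 * w ^ 2 - 1 := by ring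
  have hcard : ((Icc 1 (n - 1)).card : K) = n - 1 := by
    rw [Nat.card_Icc, Nat.add_sub_cancel, Nat.cast_pred (Nat.pos_of_ne_zero hn)]
  simp only [sum_congr rfl hsummand, hexpand, sum_sub_distrib, ← mul_sum, sum_const,
    hζ.sum_inv_one_sub_pow hn, hζ.sum_inv_one_sub_pow_sq hn, hcard, nsmul_eq_mul, mul_one]
  ring

end IsPrimitiveRoot

theorem stmt_0_general (p : ℕ) (hodd : Odd p) :
    ∑ k ∈ Finset.Icc 1 (p - 1),
      ((1 + mu p ^ (k : ℤ)) * (1 + mu p ^ (-(k : ℤ)))) /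
        ((1 - mu p ^ (k : ℤ)) * (1 - mu p ^ (-(k : ℤ)))) =
      ((p : ℂ) - 1) * ((p : ℂ) - 2) / 3 := by
  have hp : p ≠ 0 := hodd.pos.ne'
  simp only [zpow_neg, zpow_natCast]
  exact (Complex.isPrimitiveRoot_exp p hp).sum_one_add_mul_one_add_inv_div hp

theorem stmt_0 (p : ℕ) (hp : p.Prime) (hodd : Odd p) :
    ∑ k ∈ Finset.Icc 1 (p - 1),
      ((1 + mu p ^ (k : ℤ)) * (1 + mu p ^ (-(k : ℤ)))) /
        ((1 - mu p ^ (k : ℤ)) * (1 - mu p ^ (-(k : ℤ)))) =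
      ((p : ℂ) - 1) * ((p : ℂ) - 2) / 3 :=
  stmt_0_general p hodd
end

section
/- For any prime p and integers q, q' with q·q' ≡ -1 mod p and neither divisible by p, one has I_{p,q} = -I_{p,q'}, where I_{p,q} = Σ_{k=1}^{p-1} ((1+μ^k)(1+μ^{kq}))/((1-μ^k)(1-μ^{kq})) and μ = exp(2πi/p). In particular I_{p,q} = -I_{p,-q} when q' ≡ -q. -/
open Finset

/-!
Write `μ ^ k = ψ k` for the standard additive character `ψ` of `ZMod p` and
`f z = (1 + z) / (1 - z)`, so that `I_{p,q} = ∑ₓ f (ψ x) f (ψ (q x))`. Since `q q' = -1`, the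
substitution `x = q' y` turns `f (ψ (q x))` into `f (ψ y)⁻¹ = -f (ψ y)`, and the sum into
`-I_{p,q'}`.
-/

section Cayley

variable {K : Type*} [Field K]

def cayley (z : K) : K := (1 + z) / (1 - z)

-- Junk value `2 / 0 = 0`: it lets the sum over `1 ≤ k ≤ p - 1` run over all of `ZMod p`.
theorem cayley_one : cayley (1 : K) = 0 := by simp [cayley]

theorem cayley_inv {z : K} (hz : z ≠ 0) : cayley z⁻¹ = -cayley z := by
  obtain rfl | hz1 := eq_or_ne z 1
  · simp [cayley_one]
  have : 1 - z ≠ 0 := sub_ne_zero.mpr (Ne.symm hz1)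
  have : z - 1 ≠ 0 := sub_ne_zero.mpr hz1
  simp only [cayley]
  field_simp
  ring

theorem AddChar.sum_cayley_mul_cayley_eq_neg {A : Type*} [CommRing A] [Fintype A]
    (ψ : AddChar A K) {c c' : A} (h : c * c' = -1) :
    ∑ x, cayley (ψ x) * cayley (ψ (c * x)) = -∑ x, cayley (ψ x) * cayley (ψ (c' * x)) := by
  have hc' : IsUnit c' := IsUnit.of_mul_eq_one (-c) (by rw [mul_neg, mul_comm, h, neg_neg])
  calc ∑ x, cayley (ψ x) * cayley (ψ (c * x))
      = ∑ y, cayley (ψ (c' * y)) * cayley (ψ (c * (c' * y))) :=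
        (Fintype.sum_bijective _ (IsUnit.isUnit_iff_mulLeft_bijective.mp hc') _ _ fun _ => rfl).symm
    _ = ∑ y, -(cayley (ψ y) * cayley (ψ (c' * y))) := by
        refine sum_congr rfl fun y _ => ?_
        rw [← mul_assoc, h, neg_one_mul, ψ.map_neg_eq_inv, cayley_inv (ψ.val_isUnit y).ne_zero]
        ring
    _ = -∑ y, cayley (ψ y) * cayley (ψ (c' * y)) := sum_neg_distrib _

end Cayley

theorem ZMod.sum_Icc_one_pred_natCast {M : Type*} [AddCommMonoid M] (n : ℕ) [NeZero n]
    (f : ZMod n → M) (hf : f 0 = 0) : ∑ k ∈ Icc 1 (n - 1), f k = ∑ x, f x := by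
  have hsub : Icc 1 (n - 1) ⊆ range n := fun k hk => by
    simp only [mem_Icc, mem_range] at hk ⊢
    have := NeZero.pos n
    omega
  rw [sum_subset hsub fun k hk hk' => ?_]
  · exact sum_nbij' (fun k : ℕ => (k : ZMod n)) (fun x : ZMod n => x.val) (by simp)
      (by simp [ZMod.val_lt]) (fun k hk => ZMod.val_cast_of_lt (mem_range.mp hk)) (by simp)
      (by simp)
  · obtain rfl : k = 0 := by
      simp only [mem_Icc, mem_range, not_and_or] at hk hk'
      omega
    simpa using hf

theorem mu_zpow (p : ℕ) [NeZero p] (a : ℤ) : mu p ^ a = ZMod.stdAddChar (a : ZMod p) := by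
  rw [ZMod.stdAddChar_coe, mu, ← Complex.exp_int_mul]
  ring_nf

theorem Ipq_eq_sum_zmod (p : ℕ) [NeZero p] (q : ℤ) :
    Ipq p q = ∑ x : ZMod p,
      cayley (ZMod.stdAddChar x) * cayley (ZMod.stdAddChar ((q : ZMod p) * x)) := by
  rw [Ipq, ← ZMod.sum_Icc_one_pred_natCast p _ (by simp [cayley_one])]
  refine sum_congr rfl fun k _ => ?_
  rw [mu_zpow, mu_zpow, mul_div_mul_comm]
  push_cast
  rfl

theorem stmt_2_general (p : ℕ) (q q' : ℤ)
    (hqq' : q * q' ≡ -1 [ZMOD p]) :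
    Ipq p q = - Ipq p q' := by
  obtain rfl | hp := eq_or_ne p 0
  · simp [Ipq]
  have := NeZero.mk hp
  have h : (q : ZMod p) * q' = -1 := by
    exact_mod_cast (ZMod.intCast_eq_intCast_iff _ _ p).mpr hqq'
  rw [Ipq_eq_sum_zmod, Ipq_eq_sum_zmod]
  exact ZMod.stdAddChar.sum_cayley_mul_cayley_eq_neg h

theorem stmt_2 (p : ℕ) (hp : p.Prime) (q q' : ℤ)
    (hq : ¬ (p : ℤ) ∣ q) (hq' : ¬ (p : ℤ) ∣ q')
    (hqq' : q * q' ≡ -1 [ZMOD p]) :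
    Ipq p q = - Ipq p q' :=
  stmt_2_general p q q' hqq'
end

section
/- For a prime p of the form p = 4r+1, Σ_{k=1}^{p-1} ⌊−4k/p⌋² = 30r. -/
open Finset

lemma floor_aux (r k j : ℕ) (hj : j ≤ 3) (h1 : j * r < k) (h2 : k ≤ (j + 1) * r) :
    ⌊(-4 * (k : ℚ)) / (4 * r + 1)⌋ = -(j + 1) := by
  have hpos : (0 : ℚ) < 4 * r + 1 := by positivity
  rw [Int.floor_eq_iff]
  push_cast
  constructor
  · rw [le_div_iff₀ hpos]
    have : (k : ℚ) ≤ (j + 1) * r := by exact_mod_cast h2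
    nlinarith
  · rw [div_lt_iff₀ hpos]
    have h1' : (j : ℚ) * r + 1 ≤ k := by exact_mod_cast h1
    have hj' : (j : ℚ) ≤ 3 := by exact_mod_cast hj
    nlinarith

lemma sum_aux (r j : ℕ) (hj : j ≤ 3) :
    ∑ k ∈ Finset.Ioc (j * r) ((j + 1) * r), (⌊(-4 * (k : ℚ)) / (4 * r + 1)⌋) ^ 2
      = ((j : ℤ) + 1) ^ 2 * r := by
  have : ∀ k ∈ Finset.Ioc (j * r) ((j + 1) * r),
      (⌊(-4 * (k : ℚ)) / (4 * r + 1)⌋) ^ 2 = ((j : ℤ) + 1) ^ 2 := by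
    intro k hk
    rw [Finset.mem_Ioc] at hk
    rw [floor_aux r k j hj hk.1 hk.2]
    ring
  rw [Finset.sum_congr rfl this, Finset.sum_const, Nat.card_Ioc]
  have : (j + 1) * r - j * r = r := by rw [Nat.add_mul, one_mul, Nat.add_sub_cancel_left]
  rw [this]
  push_cast
  ring

theorem stmt_6 (p r : ℕ) (hp : p.Prime) (hr : 0 < r) (hpr : p = 4 * r + 1) :
    ∑ k ∈ Finset.Icc 1 (p - 1), (⌊(-4 * (k : ℚ)) / p⌋) ^ 2 = 30 * (r : ℤ) := by
  subst hpr
  have hres : 4 * r + 1 - 1 = 4 * r := by omega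
  rw [hres]
  have hIcc : Finset.Icc 1 (4 * r) = Finset.Ioc 0 (4 * r) := by
    ext x; simp [Nat.lt_iff_add_one_le]
  have hcast : ∀ k : ℕ, (⌊(-4 * (k : ℚ)) / ((4 * r + 1 : ℕ) : ℚ)⌋) ^ 2
      = (⌊(-4 * (k : ℚ)) / (4 * (r : ℚ) + 1)⌋) ^ 2 := by
    intro k; push_cast; ring_nf
  simp only [hcast]
  rw [hIcc]
  have e0 : (0 : ℕ) = 0 * r := by omega
  have e4 : 4 * r = (3 + 1) * r := by ring
  rw [show (4 : ℕ) * r = (3 + 1) * r by ring,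
      ← Finset.sum_Ioc_consecutive _ (by omega : (0:ℕ) ≤ 1 * r) (by omega : 1 * r ≤ (3+1) * r),
      ← Finset.sum_Ioc_consecutive _ (by omega : 1 * r ≤ 2 * r) (by omega : 2 * r ≤ (3+1) * r),
      ← Finset.sum_Ioc_consecutive _ (by omega : 2 * r ≤ 3 * r) (by omega : 3 * r ≤ (3+1) * r)]
  have S0 : ∑ k ∈ Finset.Ioc 0 (1 * r), (⌊(-4 * (k : ℚ)) / (4 * (r : ℚ) + 1)⌋) ^ 2
      = ((0 : ℤ) + 1) ^ 2 * r := by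
    have := sum_aux r 0 (by omega)
    simpa using this
  have S1 := sum_aux r 1 (by omega)
  have S2 := sum_aux r 2 (by omega)
  have S3 := sum_aux r 3 (by omega)
  push_cast at S1 S2 S3 ⊢
  rw [S0, S1, S2, S3]
  push_cast
  ring
end

section
/- For a prime p of the form p = 4r+3, Σ_{k=1}^{p-1} ⌊−4k/p⌋² = 30r + 13. -/
/-! Since `⌊-x⌋ = -⌈x⌉`, the summands are `⌈4k/p⌉²`, and `⌈4k/p⌉ = j` exactly when
`(j - 1) p < 4k ≤ j p`. For `p = 4r + 3` the four values `j = 1, 2, 3, 4` are taken on the blocks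
`(0, r]`, `(r, 2r + 1]`, `(2r + 1, 3r + 2]`, `(3r + 2, 4r + 2]` of sizes `r, r + 1, r + 1, r`,
so the sum is `r + 4 (r + 1) + 9 (r + 1) + 16 r = 30 r + 13`. -/

open Finset

section CeilDiv

variable {K : Type*} [Field K] [LinearOrder K] [IsStrictOrderedRing K] [FloorRing K]

theorem sq_floor_neg_eq_sq_ceil (x : K) : ⌊-x⌋ ^ 2 = ⌈x⌉ ^ 2 := by
  rw [Int.floor_neg, neg_sq]

theorem ceil_natCast_div_natCast_eq {m n : ℕ} {j : ℤ} (hn : 0 < n)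
    (hlo : (j - 1) * n < m) (hhi : m ≤ j * n) : ⌈(m : K) / n⌉ = j := by
  have hn' : (0 : K) < n := by exact_mod_cast hn
  rw [Int.ceil_eq_iff, lt_div_iff₀ hn', div_le_iff₀ hn']
  exact ⟨by exact_mod_cast hlo, by exact_mod_cast hhi⟩

theorem sum_Ioc_sq_ceil_mul_div_of_forall {c n a b : ℕ} {j : ℤ} (hn : 0 < n)
    (h : ∀ k ∈ Ioc a b, (j - 1) * n < c * k ∧ c * k ≤ j * n) :
    ∑ k ∈ Ioc a b, ⌈(c * k : K) / n⌉ ^ 2 = ((b - a : ℕ) : ℤ) * j ^ 2 := by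
  have hconst : ∀ k ∈ Ioc a b, ⌈(c * k : K) / n⌉ ^ 2 = j ^ 2 := fun k hk => by
    obtain ⟨hlo, hhi⟩ := h k hk
    rw [← Nat.cast_mul, ceil_natCast_div_natCast_eq hn (by exact_mod_cast hlo)
      (by exact_mod_cast hhi)]
  rw [sum_congr rfl hconst, sum_const, Nat.card_Ioc, nsmul_eq_mul]

end CeilDiv

theorem stmt_7_general (p r : ℕ) (hpr : p = 4 * r + 3) :
    ∑ k ∈ Finset.Icc 1 (p - 1), (⌊(-4 * (k : ℚ)) / p⌋) ^ 2 = 30 * (r : ℤ) + 13 := by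
  subst hpr
  have hp : 0 < 4 * r + 3 := by omega
  have hIcc : Icc 1 (4 * r + 3 - 1) = Ioc 0 (4 * r + 2) := by
    ext k; simp only [mem_Icc, mem_Ioc]; omega
  have hblock : ∀ {a b : ℕ} (j : ℤ),
      (∀ k ∈ Ioc a b, (j - 1) * (4 * r + 3) < 4 * (k : ℤ) ∧ 4 * (k : ℤ) ≤ j * (4 * r + 3)) →
      ∑ k ∈ Ioc a b, ⌈(4 * k : ℚ) / ↑(4 * r + 3)⌉ ^ 2 = ((b - a : ℕ) : ℤ) * j ^ 2 :=
    fun j h => sum_Ioc_sq_ceil_mul_div_of_forall hp (by exact_mod_cast h)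
  simp only [neg_mul, neg_div, sq_floor_neg_eq_sq_ceil, hIcc]
  rw [← sum_Ioc_consecutive _ (by omega : 0 ≤ 2 * r + 1) (by omega : 2 * r + 1 ≤ 4 * r + 2),
    ← sum_Ioc_consecutive _ (by omega : 0 ≤ r) (by omega : r ≤ 2 * r + 1),
    ← sum_Ioc_consecutive _ (by omega : 2 * r + 1 ≤ 3 * r + 2) (by omega : 3 * r + 2 ≤ 4 * r + 2),
    hblock 1 (fun k hk => by simp only [mem_Ioc] at hk; omega),
    hblock 2 (fun k hk => by simp only [mem_Ioc] at hk; omega),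
    hblock 3 (fun k hk => by simp only [mem_Ioc] at hk; omega),
    hblock 4 (fun k hk => by simp only [mem_Ioc] at hk; omega)]
  omega

theorem stmt_7 (p r : ℕ) (hp : p.Prime) (hpr : p = 4 * r + 3) :
    ∑ k ∈ Finset.Icc 1 (p - 1), (⌊(-4 * (k : ℚ)) / p⌋) ^ 2 = 30 * (r : ℤ) + 13 :=
  stmt_7_general p r hpr
end

section
/- For a prime p of the form p = 6r+5, Σ_{k=1}^{p-1} ⌊−6k/p⌋² = 91r + 54. -/
/-! Since `p = 6r + 5` is prime to `6`, no `6k` with `0 < k < p` is a multiple of `p`, so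
`⌊-6k/p⌋ = -⌊6k/p⌋ - 1` and the summand is `(⌊6k/p⌋ + 1)²`. As `k` runs through
`1, …, p - 1`, the quotient `⌊6k/p⌋` takes the values `0, 1, 2, 3, 4, 5` on consecutive blocks of
`r, r + 1, r + 1, r + 1, r + 1, r` integers, giving
`r · 1 + (r + 1)(4 + 9 + 16 + 25) + r · 36 = 91r + 54`. -/

open Finset

lemma Rat.floor_neg_intCast_div_natCast_of_not_dvd {n : ℤ} {p : ℕ} (hp : p ≠ 0)
    (h : ¬ (p : ℤ) ∣ n) : ⌊(-n : ℚ) / p⌋ = -(n / p) - 1 := by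
  rw [← Int.cast_neg, Rat.floor_intCast_div_natCast, Int.neg_ediv, if_neg h,
    Int.sign_natCast_of_ne_zero hp]

lemma Nat.Coprime.not_dvd_mul_of_pos_of_lt {p m k : ℕ} (hcop : p.Coprime m) (hk₀ : 0 < k)
    (hk : k < p) : ¬ p ∣ m * k :=
  fun hdvd => absurd (Nat.le_of_dvd hk₀ (hcop.dvd_of_dvd_mul_left hdvd)) (not_le.2 hk)

lemma sum_Ioc_comp_mul_div_of_forall (f : ℕ → ℤ) {m p a b j : ℕ} (hab : a ≤ b)
    (hj : ∀ k, a < k → k ≤ b → j * p ≤ m * k ∧ m * k < (j + 1) * p) :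
    ∑ k ∈ Ioc a b, f (m * k / p) = ((b : ℤ) - a) * f j := by
  rw [sum_eq_card_nsmul (b := f j), Nat.card_Ioc, nsmul_eq_mul, Nat.cast_sub hab]
  intro k hk
  obtain ⟨hlo, hhi⟩ := hj k (mem_Ioc.1 hk).1 (mem_Ioc.1 hk).2
  rw [Nat.div_eq_of_lt_le hlo hhi]

lemma sum_Ioc_sq_six_mul_div_add_one (r : ℕ) :
    ∑ k ∈ Ioc 0 (6 * r + 4), ((6 * k / (6 * r + 5) : ℕ) + 1 : ℤ) ^ 2 = 91 * r + 54 := by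
  set f : ℕ → ℤ := fun j => ((j : ℤ) + 1) ^ 2
  have block := fun a b j hab hj =>
    sum_Ioc_comp_mul_div_of_forall f (m := 6) (p := 6 * r + 5) (a := a) (b := b) (j := j) hab hj
  change ∑ k ∈ Ioc 0 (6 * r + 4), f (6 * k / (6 * r + 5)) = _
  rw [← sum_Ioc_consecutive _ (Nat.zero_le r) (by omega),
    ← sum_Ioc_consecutive _ (by omega : r ≤ 2 * r + 1) (by omega),
    ← sum_Ioc_consecutive _ (by omega : 2 * r + 1 ≤ 3 * r + 2) (by omega),
    ← sum_Ioc_consecutive _ (by omega : 3 * r + 2 ≤ 4 * r + 3) (by omega),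
    ← sum_Ioc_consecutive _ (by omega : 4 * r + 3 ≤ 5 * r + 4) (by omega),
    block 0 r 0 (by omega) (by omega),
    block r (2 * r + 1) 1 (by omega) (by omega),
    block (2 * r + 1) (3 * r + 2) 2 (by omega) (by omega),
    block (3 * r + 2) (4 * r + 3) 3 (by omega) (by omega),
    block (4 * r + 3) (5 * r + 4) 4 (by omega) (by omega),
    block (5 * r + 4) (6 * r + 4) 5 (by omega) (by omega)]
  push_cast [f]
  ring

theorem stmt_9_general (p r : ℕ) (hpr : p = 6 * r + 5) :
    ∑ k ∈ Finset.Icc 1 (p - 1), (⌊(-6 * (k : ℚ)) / p⌋) ^ 2 = 91 * (r : ℤ) + 54 := by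
  subst hpr
  have hcop : Nat.Coprime (6 * r + 5) 6 := by
    rw [Nat.coprime_mul_left_add_left]; decide
  rw [← sum_Ioc_sq_six_mul_div_add_one r, show 6 * r + 5 - 1 = 6 * r + 4 by omega,
    ← Finset.Icc_add_one_left_eq_Ioc, zero_add]
  refine sum_congr rfl fun k hk => ?_
  obtain ⟨hk₀, hk⟩ := mem_Icc.1 hk
  have hndvd : ¬ ((6 * r + 5 : ℕ) : ℤ) ∣ ((6 * k : ℕ) : ℤ) :=
    mt Int.natCast_dvd_natCast.1 (hcop.not_dvd_mul_of_pos_of_lt hk₀ (by omega))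
  have hfloor := Rat.floor_neg_intCast_div_natCast_of_not_dvd (by omega) hndvd
  push_cast at hfloor ⊢
  rw [neg_mul, hfloor]
  ring

theorem stmt_9 (p r : ℕ) (hp : p.Prime) (hpr : p = 6 * r + 5) :
    ∑ k ∈ Finset.Icc 1 (p - 1), (⌊(-6 * (k : ℚ)) / p⌋) ^ 2 = 91 * (r : ℤ) + 54 :=
  stmt_9_general p r hpr
end

section
/- For a prime p of the form p = 3r+1, Σ_{k=1}^{p-1} ⌊−3k/p⌋² = 14r. -/
open Finset

/- Split `1, …, 3r` into the blocks `(jr, (j+1)r]` for `j = 0, 1, 2`: on the `j`-th block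
`⌊-3k/(3r+1)⌋ = -(j+1)`, so the sum of squares is `r (1 + 4 + 9) = 14r`. -/

section

variable {K : Type*} [Field K] [LinearOrder K] [IsStrictOrderedRing K] [FloorRing K]

theorem floor_neg_three_mul_div_eq {r j k : ℕ} (hj : j < 3) (hk : k ∈ Ioc (j * r) ((j + 1) * r)) :
    ⌊-3 * (k : K) / (3 * r + 1 : ℕ)⌋ = -(j + 1 : ℤ) := by
  obtain ⟨hlo, hhi⟩ := mem_Ioc.mp hk
  have hlo' : (j : K) * r + 1 ≤ k := by exact_mod_cast hlo
  have hhi' : (k : K) ≤ (j + 1) * r := by exact_mod_cast hhi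
  have hj' : (j : K) + 1 ≤ 3 := by exact_mod_cast hj
  have hn : (0 : K) < (3 * r + 1 : ℕ) := by positivity
  rw [Int.floor_eq_iff, le_div_iff₀ hn, div_lt_iff₀ hn]
  push_cast
  constructor <;> nlinarith [(r.cast_nonneg : (0 : K) ≤ r)]

theorem sum_Ioc_floor_neg_three_mul_div_sq {r j : ℕ} (hj : j < 3) :
    ∑ k ∈ Ioc (j * r) ((j + 1) * r), ⌊-3 * (k : K) / (3 * r + 1 : ℕ)⌋ ^ 2 = r * (j + 1) ^ 2 := by
  rw [sum_congr rfl fun k hk => by rw [floor_neg_three_mul_div_eq hj hk], sum_const, Nat.card_Ioc,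
    show (j + 1) * r - j * r = r by rw [add_one_mul, Nat.add_sub_cancel_left], nsmul_eq_mul,
    neg_sq]

end

theorem stmt_10_general (p r : ℕ) (hpr : p = 3 * r + 1) :
    ∑ k ∈ Finset.Icc 1 (p - 1), (⌊(-3 * (k : ℚ)) / p⌋) ^ 2 = 14 * (r : ℤ) := by
  subst hpr
  have hblocks : Icc 1 (3 * r + 1 - 1) = Ioc (0 * r) (3 * r) := by
    rw [Nat.add_sub_cancel, zero_mul, ← Icc_add_one_left_eq_Ioc, zero_add]
  rw [hblocks, ← sum_Ioc_consecutive _ (by omega : 0 * r ≤ 2 * r) (by omega : 2 * r ≤ 3 * r),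
    ← sum_Ioc_consecutive _ (by omega : 0 * r ≤ 1 * r) (by omega : 1 * r ≤ 2 * r),
    sum_Ioc_floor_neg_three_mul_div_sq (j := 0) (by norm_num),
    sum_Ioc_floor_neg_three_mul_div_sq (j := 1) (by norm_num),
    sum_Ioc_floor_neg_three_mul_div_sq (j := 2) (by norm_num)]
  ring

theorem stmt_10 (p r : ℕ) (hp : p.Prime) (hr : 0 < r) (hpr : p = 3 * r + 1) :
    ∑ k ∈ Finset.Icc 1 (p - 1), (⌊(-3 * (k : ℚ)) / p⌋) ^ 2 = 14 * (r : ℤ) :=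
  stmt_10_general p r hpr
end

section
/- For a prime p of the form p = 3r+2, Σ_{k=1}^{p-1} ⌊−3k/p⌋² = 14r + 4. -/
/-! As `k` runs over `1, …, 3r+1`, the quantity `⌈3k/(3r+2)⌉` equals `1` on the first `r` values,
`2` on the next `r+1` and `3` on the last `r`, so the sum of the squares of
`⌊-3k/(3r+2)⌋ = -⌈3k/(3r+2)⌉` is `r + 4(r+1) + 9r`. -/

open Finset

lemma floor_neg_div_eq {n a : ℕ} {m : ℤ} (hn : 0 < n) (hlo : (m - 1) * n < a)
    (hhi : a ≤ m * n) : ⌊(-(a : ℚ)) / n⌋ = -m := by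
  have hn' : (0 : ℚ) < n := by exact_mod_cast hn
  rw [neg_div, Int.floor_neg, neg_inj, Int.ceil_eq_iff, lt_div_iff₀ hn', div_le_iff₀ hn']
  exact ⟨by exact_mod_cast hlo, by exact_mod_cast hhi⟩

lemma sum_Ioc_sq_of_eq_const {f : ℕ → ℤ} {a b : ℕ} {c : ℤ} (hab : a ≤ b)
    (h : ∀ k ∈ Ioc a b, f k = c) : ∑ k ∈ Ioc a b, f k ^ 2 = ((b : ℤ) - a) * c ^ 2 := by
  rw [sum_congr rfl fun k hk => by rw [h k hk], sum_const, Nat.card_Ioc, nsmul_eq_mul,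
    Nat.cast_sub hab]

lemma sum_Ioc_sq_floor_neg_three_mul_div {n a b : ℕ} (m : ℤ) (hn : 0 < n) (hab : a ≤ b)
    (h : ∀ k ∈ Ioc a b, (m - 1) * n < 3 * k ∧ 3 * k ≤ m * n) :
    ∑ k ∈ Ioc a b, ⌊(-3 * (k : ℚ)) / n⌋ ^ 2 = ((b : ℤ) - a) * m ^ 2 := by
  rw [sum_Ioc_sq_of_eq_const (c := -m) hab fun k hk => ?_, neg_sq]
  have := floor_neg_div_eq (a := 3 * k) hn (h k hk).1 (h k hk).2
  rwa [Nat.cast_mul, Nat.cast_ofNat, ← neg_mul] at this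

theorem stmt_11_general (p r : ℕ) (hpr : p = 3 * r + 2) :
    ∑ k ∈ Finset.Icc 1 (p - 1), (⌊(-3 * (k : ℚ)) / p⌋) ^ 2 = 14 * (r : ℤ) + 4 := by
  subst hpr
  have hp : 0 < 3 * r + 2 := by omega
  have hIcc : Icc 1 (3 * r + 2 - 1) = Ioc 0 (3 * r + 1) := by
    ext k; simp only [mem_Icc, mem_Ioc]; omega
  rw [hIcc, ← sum_Ioc_consecutive _ (Nat.zero_le r) (by omega : r ≤ 3 * r + 1),
    ← sum_Ioc_consecutive _ (by omega : r ≤ 2 * r + 1) (by omega : 2 * r + 1 ≤ 3 * r + 1),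
    sum_Ioc_sq_floor_neg_three_mul_div 1 hp (Nat.zero_le r)
      (fun k hk => by simp only [mem_Ioc] at hk; push_cast; omega),
    sum_Ioc_sq_floor_neg_three_mul_div 2 hp (by omega)
      (fun k hk => by simp only [mem_Ioc] at hk; push_cast; omega),
    sum_Ioc_sq_floor_neg_three_mul_div 3 hp (by omega)
      (fun k hk => by simp only [mem_Ioc] at hk; push_cast; omega)]
  push_cast
  ring

theorem stmt_11 (p r : ℕ) (hp : p.Prime) (hpr : p = 3 * r + 2) :
    ∑ k ∈ Finset.Icc 1 (p - 1), (⌊(-3 * (k : ℚ)) / p⌋) ^ 2 = 14 * (r : ℤ) + 4 :=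
  stmt_11_general p r hpr
end

section
/- For coprime integers q and prime p > 0, the identity Σ_{k=1}^{p-1} ⌊kq/p⌋² − (2q/p)·Σ_{k=1}^{p-1} k⌊kq/p⌋ = (1−q²)(p−1)(2p−1)/(6p) holds. -/
open Finset

lemma sq_sum (n : ℕ) : ∑ k ∈ Icc 1 n, (k : ℚ) ^ 2 = n * (n + 1) * (2 * n + 1) / 6 := by
  induction n with
  | zero => simp
  | succ m ih =>
    rw [Finset.sum_Icc_succ_top (by omega), ih]
    push_cast
    ring

lemma perm_sum (p : ℕ) (hp : p.Prime) (q : ℤ) (hq : Int.gcd q p = 1) :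
    ∑ k ∈ Icc 1 (p - 1), ((((k : ℤ) * q) % p : ℤ) : ℚ) ^ 2 = ∑ k ∈ Icc 1 (p - 1), (k : ℚ) ^ 2 := by
  haveI : Fact p.Prime := ⟨hp⟩
  have hp0 : 0 < p := hp.pos
  have hqz : (q : ZMod p) ≠ 0 := by
    intro h
    have hdvd : (p : ℤ) ∣ q := (ZMod.intCast_zmod_eq_zero_iff_dvd q p).mp h
    have hco : IsCoprime q (p : ℤ) := Int.isCoprime_iff_gcd_eq_one.mpr hq
    have hu : IsUnit (p : ℤ) := hco.isUnit_of_dvd' hdvd dvd_rfl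
    rw [Int.isUnit_iff] at hu
    have h2 := hp.two_le
    rcases hu with h1 | h1 <;> omega
  have hr : Icc 1 (p - 1) = (range p).erase 0 := by
    ext k
    simp only [Finset.mem_Icc, Finset.mem_erase, Finset.mem_range]
    omega
  rw [hr, Finset.sum_erase _ (by simp), Finset.sum_erase _ (by simp)]
  have key : ∀ h : ZMod p → ℚ, ∑ k ∈ range p, h (k : ZMod p) = ∑ x : ZMod p, h x := by
    intro h
    refine Finset.sum_nbij' (fun k => (k : ZMod p)) (fun x => x.val) ?_ ?_ ?_ ?_ ?_
    · intro a _; exact Finset.mem_univ _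
    · intro a _; exact Finset.mem_range.mpr (ZMod.val_lt a)
    · intro a ha; exact ZMod.val_natCast_of_lt (Finset.mem_range.mp ha)
    · intro a _; simp [ZMod.natCast_val, ZMod.cast_id]
    · intro a _; rfl
  calc ∑ k ∈ range p, ((((k : ℤ) * q) % p : ℤ) : ℚ) ^ 2
      = ∑ k ∈ range p, (((((k : ℕ) : ZMod p) * (q : ZMod p)).val : ℚ)) ^ 2 := by
        refine Finset.sum_congr rfl fun k _ => ?_
        have hv : ((((((k : ℤ) * q : ℤ)) : ZMod p)).val : ℤ) = ((k : ℤ) * q) % p :=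
          ZMod.val_intCast _
        push_cast at hv ⊢
        rw [← hv]
        norm_cast
    _ = ∑ x : ZMod p, ((x * (q : ZMod p)).val : ℚ) ^ 2 :=
        key (fun x => ((x * (q : ZMod p)).val : ℚ) ^ 2)
    _ = ∑ x : ZMod p, ((x.val : ℚ)) ^ 2 :=
        Fintype.sum_bijective (· * (q : ZMod p)) (mulRight_bijective₀ _ hqz) _ _ (fun x => rfl)
    _ = ∑ k ∈ range p, (k : ℚ) ^ 2 := by
        rw [← key (fun x => ((x.val : ℚ)) ^ 2)]
        refine Finset.sum_congr rfl fun k hk => ?_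
        rw [ZMod.val_natCast_of_lt (Finset.mem_range.mp hk)]

theorem stmt_12 (p : ℕ) (hp : p.Prime) (q : ℤ) (hq : Int.gcd q p = 1) :
    (∑ k ∈ Finset.Icc 1 (p - 1), ((⌊((k : ℚ) * q) / p⌋ : ℚ)) ^ 2) -
      (2 * (q : ℚ) / p) * ∑ k ∈ Finset.Icc 1 (p - 1), (k : ℚ) * (⌊((k : ℚ) * q) / p⌋ : ℚ) =
      (1 - (q : ℚ) ^ 2) * ((p : ℚ) - 1) * (2 * (p : ℚ) - 1) / (6 * p) := by
  have hp0 : (0 : ℚ) < p := by exact_mod_cast hp.pos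
  have hpne : (p : ℚ) ≠ 0 := hp0.ne'
  have hfl : ∀ k : ℕ, (⌊((k : ℚ) * q) / p⌋ : ℚ)
      = ((k : ℚ) * q) / p - (((((k : ℤ) * q) % p : ℤ)) : ℚ) / p := by
    intro k
    have h1 : ((k : ℚ) * q) = ((((k : ℤ) * q : ℤ)) : ℚ) := by push_cast; ring
    rw [h1, Rat.floor_intCast_div_natCast]
    have h2 := Int.mul_ediv_add_emod ((k : ℤ) * q) p
    have h3 : (p : ℚ) * ((((k : ℤ) * q / p : ℤ)) : ℚ) + (((((k : ℤ) * q) % p : ℤ)) : ℚ)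
        = ((((k : ℤ) * q : ℤ)) : ℚ) := by exact_mod_cast congrArg (Int.cast : ℤ → ℚ) h2
    field_simp
    linarith
  rw [Finset.mul_sum, ← Finset.sum_sub_distrib]
  have key : ∀ k ∈ Icc 1 (p - 1),
      (⌊((k : ℚ) * q) / p⌋ : ℚ) ^ 2 - (2 * (q : ℚ) / p) * ((k : ℚ) * (⌊((k : ℚ) * q) / p⌋ : ℚ))
      = (((((k : ℤ) * q) % p : ℤ)) : ℚ) ^ 2 / p ^ 2 - (q : ℚ) ^ 2 * (k : ℚ) ^ 2 / p ^ 2 := by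
    intro k _
    rw [hfl k]
    field_simp
    ring
  rw [Finset.sum_congr rfl key, Finset.sum_sub_distrib, ← Finset.sum_div, ← Finset.sum_div,
    ← Finset.mul_sum, perm_sum p hp q hq, sq_sum (p - 1)]
  have hc : (((p - 1 : ℕ)) : ℚ) = (p : ℚ) - 1 := by
    have := hp.pos
    push_cast [Nat.cast_sub (by omega : 1 ≤ p)]
    ring
  rw [hc]
  field_simp
  ring
end

section
/- For an odd prime p, I_{p,2} = −(p−1)(p−5)/6, where I_{p,q} = Σ_{k=1}^{p-1} ((1+μ^k)(1+μ^{kq}))/((1−μ^k)(1−μ^{kq})) and μ = exp(2πi/p). -/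
open Finset

lemma aux_sum1 (n : ℕ) : ∑ j ∈ range n, ((j:ℂ)+1) = n*(n+1)/2 := by
  induction n with
  | zero => simp
  | succ n ih => rw [sum_range_succ, ih]; push_cast; ring

lemma aux_sum2 (n : ℕ) : ∑ j ∈ range n, ((j:ℂ)+1)*((n:ℂ)-j) = n*(n+1)*(n+2)/6 := by
  induction n with
  | zero => simp
  | succ n ih =>
    have e : ∀ j ∈ range (n+1), ((j:ℂ)+1)*(((n+1:ℕ):ℂ)-j)
        = ((j:ℂ)+1)*((n:ℂ)-j) + ((j:ℂ)+1) := by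
      intro j _; push_cast; ring
    rw [sum_congr rfl e, sum_add_distrib, sum_range_succ _ n, ih, aux_sum1]
    push_cast; ring

lemma aux_abel (z : ℂ) (n : ℕ) :
    (∑ j ∈ range n, ((j:ℂ)+1)*z^j) * (1-z) = (∑ j ∈ range n, z^j) - n*z^n := by
  induction n with
  | zero => simp
  | succ n ih =>
    rw [sum_range_succ, sum_range_succ, add_mul, ih]
    push_cast; ring

lemma aux_orth {p : ℕ} {μ : ℂ} (h : IsPrimitiveRoot μ p) (m : ℕ) :
    ∑ k ∈ range p, (μ^m)^k = if p ∣ m then (p:ℂ) else 0 := by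
  by_cases hd : p ∣ m
  · rw [if_pos hd, (h.pow_eq_one_iff_dvd m).mpr hd]
    simp
  · rw [if_neg hd]
    have hx : μ^m ≠ 1 := fun hx => hd ((h.pow_eq_one_iff_dvd m).mp hx)
    have hxp : (μ^m)^p = 1 := by
      rw [← pow_mul, mul_comm, pow_mul, h.pow_eq_one, one_pow]
    rw [geom_sum_eq hx, hxp]
    simp

lemma aux_main_sum (p : ℕ) (hp : p.Prime) (μ : ℂ) (h : IsPrimitiveRoot μ p)
    (T : ℂ → ℂ) (hT : T = fun z => ∑ j ∈ range p, ((j:ℂ)+1) * z^j) :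
    ∑ k ∈ Icc 1 (p-1), μ^k * (T (μ^k))^2
      = (p:ℂ)*((p:ℂ)*((p:ℂ)+1)*((p:ℂ)+2)/6) - ((p:ℂ)*((p:ℂ)+1)/2)^2 := by
  have expand : ∀ k : ℕ, μ^k * (T (μ^k))^2
      = ∑ j ∈ range p, ∑ l ∈ range p, ((j:ℂ)+1)*((l:ℂ)+1) * (μ^(j+l+1))^k := by
    intro k
    rw [hT]; dsimp only
    rw [sq, Finset.sum_mul_sum, Finset.mul_sum]
    refine Finset.sum_congr rfl fun j _ => ?_
    rw [Finset.mul_sum]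
    refine Finset.sum_congr rfl fun l _ => ?_
    rw [← pow_mul μ k j, ← pow_mul μ k l, ← pow_mul μ (j+l+1) k,
      show (j+l+1)*k = k*j + (k*l + k) by ring, pow_add, pow_add]
    ring
  have hp1 : 1 ≤ p := hp.one_lt.le
  have Icc_sum : ∀ x : ℂ, ∑ k ∈ Icc 1 (p-1), x^k = (∑ k ∈ range p, x^k) - 1 := by
    intro x
    rw [range_eq_Ico, Finset.sum_eq_sum_Ico_succ_bot hp.pos, pow_zero,
      show Icc 1 (p-1) = Ico 1 p from by
        conv_rhs => rw [show p = p - 1 + 1 from by omega]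
        rw [Finset.Ico_add_one_right_eq_Icc]]
    ring
  calc ∑ k ∈ Icc 1 (p-1), μ^k * (T (μ^k))^2
      = ∑ j ∈ range p, ∑ l ∈ range p, ∑ k ∈ Icc 1 (p-1),
          ((j:ℂ)+1)*((l:ℂ)+1) * (μ^(j+l+1))^k := by
        rw [Finset.sum_congr rfl fun k _ => expand k, Finset.sum_comm]
        refine Finset.sum_congr rfl fun j _ => Finset.sum_comm
    _ = ∑ j ∈ range p, ∑ l ∈ range p,
          ((j:ℂ)+1)*((l:ℂ)+1) * ((if p ∣ (j+l+1) then (p:ℂ) else 0) - 1) := by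
        refine Finset.sum_congr rfl fun j _ => Finset.sum_congr rfl fun l _ => ?_
        rw [← Finset.mul_sum, Icc_sum, aux_orth h]
    _ = (∑ j ∈ range p, ∑ l ∈ range p,
          ((j:ℂ)+1)*((l:ℂ)+1) * (if p ∣ (j+l+1) then (p:ℂ) else 0))
        - (∑ j ∈ range p, ((j:ℂ)+1)) * (∑ l ∈ range p, ((l:ℂ)+1)) := by
        rw [Finset.sum_mul_sum, ← Finset.sum_sub_distrib]
        refine Finset.sum_congr rfl fun j _ => ?_
        rw [← Finset.sum_sub_distrib]
        exact Finset.sum_congr rfl fun l _ => by ring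
    _ = (∑ j ∈ range p, ((j:ℂ)+1)*((p:ℂ)-j)*(p:ℂ))
        - ((p:ℂ)*((p:ℂ)+1)/2) * ((p:ℂ)*((p:ℂ)+1)/2) := by
        rw [aux_sum1]
        congr 1
        refine Finset.sum_congr rfl fun j hj => ?_
        have hjp : j < p := mem_range.mp hj
        rw [Finset.sum_eq_single (p-1-j)]
        · rw [if_pos (show p ∣ (j+(p-1-j)+1) by rw [show j+(p-1-j)+1 = p by omega])]
          have : ((p-1-j : ℕ) : ℂ) = (p:ℂ) - 1 - (j:ℂ) := by
            have : (p-1-j : ℕ) = p - (1+j) := by omega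
            rw [this, Nat.cast_sub (by omega)]
            push_cast; ring
          rw [this]; ring
        · intro l hl hne
          rw [if_neg (by
            intro hd
            have h1 : 0 < j + l + 1 := by omega
            have h2 : j + l + 1 < 2*p := by have := mem_range.mp hl; omega
            have : j + l + 1 = p := by
              obtain ⟨c, hc⟩ := hd
              rcases c with _ | _ | c
              · omega
              · omega
              · have h3 : p * 2 ≤ p * (c+1+1) := Nat.mul_le_mul_left p (by omega)
                omega
            omega), mul_zero]
        · intro hni
          exact absurd (mem_range.mpr (by omega)) hni
    _ = (p:ℂ)*((p:ℂ)*((p:ℂ)+1)*((p:ℂ)+2)/6) - ((p:ℂ)*((p:ℂ)+1)/2)^2 := by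
        rw [← Finset.sum_mul, aux_sum2]
        ring

theorem stmt_13 (p : ℕ) (hp : p.Prime) (hodd : Odd p) :
    Ipq p 2 = -(((p : ℂ) - 1) * ((p : ℂ) - 5) / 6) := by
  have hp0 : p ≠ 0 := hp.pos.ne'
  have hp1 : 1 ≤ p := hp.one_lt.le
  have hp2 : p ≠ 2 := by rintro rfl; exact (Nat.not_odd_iff_even.mpr (by norm_num)) hodd
  have hpC : (p:ℂ) ≠ 0 := Nat.cast_ne_zero.mpr hp0
  have h : IsPrimitiveRoot (mu p) p := Complex.isPrimitiveRoot_exp p hp0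
  set μ := mu p with hμ
  set T : ℂ → ℂ := fun z => ∑ j ∈ range p, ((j:ℂ)+1) * z^j with hT
  have key : ∀ k ∈ Icc 1 (p-1),
      ((1 + μ ^ (k : ℤ)) * (1 + μ ^ ((2:ℤ) * k))) /
        ((1 - μ ^ (k : ℤ)) * (1 - μ ^ ((2:ℤ) * k)))
      = 1 + 2 * (μ^k * (T (μ^k))^2) / (p:ℂ)^2 := by
    intro k hk
    obtain ⟨hk1, hk2⟩ := mem_Icc.mp hk
    have hkp : k < p := lt_of_le_of_lt hk2 (Nat.sub_lt hp.pos one_pos)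
    have hpk : ¬ p ∣ k := fun hd => by
      have := Nat.le_of_dvd (by omega) hd; omega
    have hp2k : ¬ p ∣ 2*k := by
      intro hd
      rcases (Nat.Prime.dvd_mul hp).mp hd with h2 | h2
      · exact hp2 ((Nat.prime_dvd_prime_iff_eq hp Nat.prime_two).mp h2)
      · exact hpk h2
    have hz1 : μ^k ≠ 1 := fun hx => hpk ((h.pow_eq_one_iff_dvd k).mp hx)
    have hz2 : μ^(2*k) ≠ 1 := fun hx => hp2k ((h.pow_eq_one_iff_dvd _).mp hx)
    have hsub1 : 1 - μ^k ≠ 0 := sub_ne_zero.mpr (Ne.symm hz1)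
    have hsub2 : 1 - μ^(2*k) ≠ 0 := sub_ne_zero.mpr (Ne.symm hz2)
    have e1 : μ ^ (k : ℤ) = μ^k := zpow_natCast μ k
    have e2 : μ ^ ((2:ℤ) * k) = μ^(2*k) := by
      rw [show ((2:ℤ)*(k:ℤ)) = ((2*k : ℕ) : ℤ) by push_cast; ring, zpow_natCast]
    rw [e1, e2]
    have hgeom := aux_orth h k
    rw [if_neg hpk] at hgeom
    have hμkp : (μ^k)^p = 1 := by
      rw [← pow_mul, mul_comm, pow_mul, h.pow_eq_one, one_pow]
    have hTk : T (μ^k) * (1 - μ^k) = -(p:ℂ) := by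
      rw [hT]; dsimp only
      rw [aux_abel (μ^k) p, hgeom, hμkp]; ring
    have hpow2 : μ^(2*k) = (μ^k)^2 := by rw [mul_comm, pow_mul]
    have lhs_eq : ((1 + μ^k) * (1 + μ^(2*k))) / ((1 - μ^k) * (1 - μ^(2*k)))
        = 1 + 2*(μ^k)/(1-μ^k)^2 := by
      rw [hpow2] at hsub2 ⊢
      field_simp
      ring
    rw [lhs_eq]
    congr 1
    rw [div_eq_div_iff (pow_ne_zero 2 hsub1) (pow_ne_zero 2 hpC)]
    linear_combination (-2*(μ^k)*(T (μ^k)*(1-μ^k) - (p:ℂ))) * hTk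
  have hsum := aux_main_sum p hp μ h T hT
  rw [Ipq, Finset.sum_congr rfl key, Finset.sum_add_distrib, Finset.sum_const,
    Nat.card_Icc, ← Finset.sum_div, ← Finset.mul_sum, hsum]
  have hc : ((p - 1 + 1 - 1 : ℕ) : ℂ) = (p:ℂ) - 1 := by
    rw [show p - 1 + 1 - 1 = p - 1 by omega, Nat.cast_sub hp1]
    norm_num
  rw [nsmul_eq_mul, hc]
  field_simp
  ring
end

section
/- For a prime p > 3, define def_(4) = I_{p,1} + 3·I_{p,-3}, where I_{p,q} = Σ_{k=1}^{p-1} ((1+μ^k)(1+μ^{kq}))/((1−μ^k)(1−μ^{kq})) and μ = exp(2πi/p). Then def_(4) = −8r if p = 3r+1 and def_(4) = −4r if p = 3r+2. -/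
open Finset

/-! With ζ = μ^k, the summand of `I_{p,1} + 3 I_{p,-3}` is `-2 - 2 (ζ - ζ²)/(1 - ζ³)`.
Since 3 is invertible mod p there are `a, b` with `μ = (μ³)^a` and `μ² = (μ³)^b`, so with
`η = ζ³` the fraction is the geometric sum `±∑ η^i` over `i` between `a` and `b`. When that range
contains no multiple of p, each power `η^i` sums to `-1` over k, and the total is `a - b`.
For `p = 3r+1` take `(a, b) = (2r+1, r+1)`, for `p = 3r+2` take `(r+1, 2r+2)`. -/

section Field

variable {K : Type*} [Field K]

theorem IsPrimitiveRoot.sum_Icc_pow_pow_eq_neg_one {ν : K} {p i : ℕ} (hν : IsPrimitiveRoot ν p)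
    (hp : 0 < p) (hi : ¬ p ∣ i) : ∑ k ∈ Icc 1 (p - 1), (ν ^ k) ^ i = -1 := by
  have hne : ν ^ i ≠ 1 := fun h => hi ((hν.pow_eq_one_iff_dvd i).mp h)
  have hvanish : ∑ k ∈ range p, (ν ^ i) ^ k = 0 := by
    rw [geom_sum_eq hne, ← pow_mul, mul_comm, pow_mul, hν.pow_eq_one, one_pow, sub_self, zero_div]
  rw [sum_range_eq_add_Ico _ hp, pow_zero] at hvanish
  rw [Icc_sub_one_right_eq_Ico_of_not_isMin (by simpa using hp.ne')]
  simp_rw [pow_right_comm ν _ i]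
  linear_combination hvanish

theorem IsPrimitiveRoot.sum_Icc_pow_sub_pow_div_one_sub {ν : K} {p m n : ℕ}
    (hν : IsPrimitiveRoot ν p) (hp : 0 < p) (hfree : ∀ i, min m n ≤ i → i < max m n → ¬ p ∣ i) :
    ∑ k ∈ Icc 1 (p - 1), ((ν ^ k) ^ m - (ν ^ k) ^ n) / (1 - ν ^ k) = m - n := by
  wlog hmn : m ≤ n generalizing m n
  · rw [← neg_sub, ← this (by rwa [min_comm, max_comm]) (by omega), ← sum_neg_distrib]
    exact sum_congr rfl fun k _ => by ring
  have hgeom : ∀ k ∈ Icc 1 (p - 1),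
      ((ν ^ k) ^ m - (ν ^ k) ^ n) / (1 - ν ^ k) = ∑ i ∈ Ico m n, (ν ^ k) ^ i := by
    intro k hk
    rw [mem_Icc] at hk
    exact (geom_sum_Ico' (hν.pow_ne_one_of_pos_of_lt (by omega) (by omega)) hmn).symm
  rw [sum_congr rfl hgeom, sum_comm, sum_congr rfl fun i hi =>
    hν.sum_Icc_pow_pow_eq_neg_one hp (hfree i (by simp at hi; omega) (by simp at hi; omega))]
  simp [Nat.cast_sub hmn]

def defectTerm (ζ : K) (q : ℤ) : K :=
  (1 + ζ) * (1 + ζ ^ q) / ((1 - ζ) * (1 - ζ ^ q))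

theorem defectTerm_one_add_three_mul_defectTerm_neg_three {ζ : K} (h0 : ζ ≠ 0) (h1 : ζ ≠ 1)
    (h3 : ζ ^ 3 ≠ 1) :
    defectTerm ζ 1 + 3 * defectTerm ζ (-3) = -2 - 2 * ((ζ - ζ ^ 2) / (1 - ζ ^ 3)) := by
  have h1' : 1 - ζ ≠ 0 := sub_ne_zero.mpr h1.symm
  have h3' : ζ ^ 3 - 1 ≠ 0 := sub_ne_zero.mpr h3
  rw [defectTerm, defectTerm, zpow_one, zpow_neg, zpow_ofNat]
  field_simp
  ring

end Field

theorem isPrimitiveRoot_mu {p : ℕ} (hp : p ≠ 0) : IsPrimitiveRoot (mu p) p :=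
  Complex.isPrimitiveRoot_exp p hp

theorem mu_pow_mul_add (p c j : ℕ) : mu p ^ (p * c + j) = mu p ^ j := by
  have hperiod : mu p ^ p = 1 := by
    rcases p.eq_zero_or_pos with rfl | hp
    · exact pow_zero _
    · exact (isPrimitiveRoot_mu hp.ne').pow_eq_one
  rw [pow_add, pow_mul, hperiod, one_pow, one_mul]

theorem Ipq_eq_sum_defectTerm (p : ℕ) (q : ℤ) :
    Ipq p q = ∑ k ∈ Icc 1 (p - 1), defectTerm (mu p ^ k) q := by
  simp only [Ipq, defectTerm, mul_comm q, zpow_mul, zpow_natCast]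

theorem Ipq_one_add_three_mul_Ipq_neg_three {p a b : ℕ} (hp : 0 < p) (hcop : Nat.Coprime 3 p)
    (ha : mu p = (mu p ^ 3) ^ a) (hb : mu p ^ 2 = (mu p ^ 3) ^ b)
    (hfree : ∀ i, min a b ≤ i → i < max a b → ¬ p ∣ i) :
    Ipq p 1 + 3 * Ipq p (-3) = -2 * ((p : ℂ) - 1) - 2 * ((a : ℂ) - b) := by
  set μ := mu p
  have hμ : IsPrimitiveRoot μ p := isPrimitiveRoot_mu hp.ne'
  have hν : IsPrimitiveRoot (μ ^ 3) p := hμ.pow_of_coprime 3 hcop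
  have hterm : ∀ k ∈ Icc 1 (p - 1), defectTerm (μ ^ k) 1 + 3 * defectTerm (μ ^ k) (-3)
      = -2 - 2 * ((((μ ^ 3) ^ k) ^ a - ((μ ^ 3) ^ k) ^ b) / (1 - (μ ^ 3) ^ k)) := by
    intro k hk
    rw [mem_Icc] at hk
    have hcube : (μ ^ k) ^ 3 = (μ ^ 3) ^ k := pow_right_comm μ k 3
    rw [defectTerm_one_add_three_mul_defectTerm_neg_three (pow_ne_zero k (hμ.ne_zero hp.ne'))
      (hμ.pow_ne_one_of_pos_of_lt (by omega) (by omega))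
      (hcube ▸ hν.pow_ne_one_of_pos_of_lt (by omega) (by omega)), hcube,
      pow_right_comm (μ ^ 3) k a, ← ha, pow_right_comm (μ ^ 3) k b, ← hb, pow_right_comm μ k 2]
  rw [Ipq_eq_sum_defectTerm, Ipq_eq_sum_defectTerm, mul_sum, ← sum_add_distrib,
    sum_congr rfl hterm, sum_sub_distrib, ← mul_sum, hν.sum_Icc_pow_sub_pow_div_one_sub hp hfree,
    sum_const, Nat.card_Icc, Nat.add_sub_cancel, nsmul_eq_mul, Nat.cast_sub (by omega)]
  push_cast
  ring

theorem stmt_14_general (p : ℕ) :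
    (∀ r : ℕ, p = 3 * r + 1 → Ipq p 1 + 3 * Ipq p (-3) = -(8 * (r : ℂ))) ∧
    (∀ r : ℕ, p = 3 * r + 2 → Ipq p 1 + 3 * Ipq p (-3) = -(4 * (r : ℂ))) := by
  constructor
  · rintro r rfl
    rw [Ipq_one_add_three_mul_Ipq_neg_three (a := 2 * r + 1) (b := r + 1) (by omega) (by simp)
      (by rw [← pow_mul, show 3 * (2 * r + 1) = (3 * r + 1) * 2 + 1 by ring, mu_pow_mul_add,
        pow_one])
      (by rw [← pow_mul, show 3 * (r + 1) = (3 * r + 1) * 1 + 2 by ring, mu_pow_mul_add])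
      fun i _ hi hdvd => by have := Nat.le_of_dvd (by omega) hdvd; omega]
    push_cast
    ring
  · rintro r rfl
    rw [Ipq_one_add_three_mul_Ipq_neg_three (a := r + 1) (b := 2 * r + 2) (by omega)
      (by simp [Nat.odd_iff])
      (by rw [← pow_mul, show 3 * (r + 1) = (3 * r + 2) * 1 + 1 by ring, mu_pow_mul_add, pow_one])
      (by rw [← pow_mul, show 3 * (2 * r + 2) = (3 * r + 2) * 2 + 2 by ring, mu_pow_mul_add])
      fun i _ hi hdvd => by have := Nat.le_of_dvd (by omega) hdvd; omega]
    push_cast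
    ring

theorem stmt_14 (p : ℕ) (hp : p.Prime) (hp3 : 3 < p) :
    (∀ r : ℕ, p = 3 * r + 1 → Ipq p 1 + 3 * Ipq p (-3) = -(8 * (r : ℂ))) ∧
    (∀ r : ℕ, p = 3 * r + 2 → Ipq p 1 + 3 * Ipq p (-3) = -(4 * (r : ℂ))) :=
  stmt_14_general p
end

section
/- For a prime p > 3, define def_(3) = I_{p,2} + 2·I_{p,-4}, where I_{p,q} = Σ_{k=1}^{p-1} ((1+μ^k)(1+μ^{kq}))/((1−μ^k)(1−μ^{kq})) and μ = exp(2πi/p). Then def_(3) = −8r if p = 4r+1 and def_(3) = 2 if p = 4r+3. -/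
open Finset

/-!
For `w = μ^k ≠ 1`, the `k`-th terms of `I_{p,2}` and `2 I_{p,-4}` add up to
`-(1 + w)² / (1 + w²) = -1 - 2w / (1 + w²)`. Since `p` is odd and `w^p = 1`, the geometric series
gives `2 / (1 + w²) = ∑_{t < p} (-w²)^t`, so summing over `k` and exchanging the sums leaves the
character sums `∑_{k=1}^{p-1} μ^{(2t+1)k}`, which equal `p - 1` for `2t + 1 = p` and `-1` otherwise.
Hence `I_{p,2} + 2 I_{p,-4} = 2 - p - (-1)^{(p-1)/2} p`.
-/

theorem IsPrimitiveRoot.pow_pow_four_ne_one {M : Type*} [CommMonoid M] {ζ : M} {n k : ℕ}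
    (hζ : IsPrimitiveRoot ζ n) (hn : Odd n) (hk0 : 0 < k) (hkn : k < n) : (ζ ^ k) ^ 4 ≠ 1 := by
  rw [← pow_mul, Ne, hζ.pow_eq_one_iff_dvd]
  intro h
  have := Nat.le_of_dvd hk0 ((hn.coprime_two_right.pow_right 2).dvd_of_dvd_mul_right h)
  omega

section Field

variable {K : Type*} [Field K]

theorem pair_term_eq {w : K} (hw : w ≠ 0) (hw4 : w ^ 4 ≠ 1) :
    (1 + w) * (1 + w ^ 2) / ((1 - w) * (1 - w ^ 2)) +
        2 * ((1 + w) * (1 + (w ^ 4)⁻¹) / ((1 - w) * (1 - (w ^ 4)⁻¹))) =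
      -1 - 2 * w / (1 + w ^ 2) := by
  have hfac : (1 - w) * (1 + w) * (1 + w ^ 2) ≠ 0 := by
    rw [show (1 - w) * (1 + w) * (1 + w ^ 2) = 1 - w ^ 4 by ring]
    exact sub_ne_zero.2 hw4.symm
  obtain ⟨⟨h1, h1'⟩, h2⟩ := mul_ne_zero_iff.1 hfac |>.imp_left mul_ne_zero_iff.1
  have h4 : 1 - (w ^ 4)⁻¹ ≠ 0 := sub_ne_zero.2 fun h => hw4 (inv_eq_one.1 h.symm)
  have h2' : 1 - w ^ 2 ≠ 0 := by
    rw [show 1 - w ^ 2 = (1 - w) * (1 + w) by ring]; exact mul_ne_zero h1 h1'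
  field_simp
  ring

theorem geom_sum_eq_two_div_of_pow_eq_neg_one {x : K} {n : ℕ} (hx : x ^ n = -1) (hx1 : x ≠ 1) :
    ∑ t ∈ range n, x ^ t = 2 / (1 - x) := by
  rw [geom_sum_eq hx1, hx, div_eq_div_iff (sub_ne_zero.2 hx1) (sub_ne_zero.2 hx1.symm)]
  ring

theorem IsPrimitiveRoot.sum_Icc_pow_pow {ζ : K} {n : ℕ} (hζ : IsPrimitiveRoot ζ n) (hn : 0 < n)
    (j : ℕ) : ∑ k ∈ Icc 1 (n - 1), (ζ ^ j) ^ k = (if n ∣ j then (n : K) else 0) - 1 := by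
  have hIcc : Icc 1 (n - 1) = Ico 1 n := by ext; simp; omega
  rw [hIcc, sum_Ico_eq_sub _ hn, sum_range_one, pow_zero]
  congr 1
  split_ifs with hj
  · simp [(hζ.pow_eq_one_iff_dvd j).2 hj]
  · rw [geom_sum_eq (mt (hζ.pow_eq_one_iff_dvd j).1 hj), pow_right_comm, hζ.pow_eq_one, one_pow,
      sub_self, zero_div]

theorem IsPrimitiveRoot.sum_two_mul_div_one_add_sq {ζ : K} {m : ℕ}
    (hζ : IsPrimitiveRoot ζ (2 * m + 1)) :
    ∑ k ∈ Icc 1 (2 * m), 2 * ζ ^ k / (1 + (ζ ^ k) ^ 2) = (-1 : K) ^ m * (2 * m + 1) - 1 := by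
  have hodd : Odd (2 * m + 1) := odd_two_mul_add_one m
  have hterm : ∀ k ∈ Icc 1 (2 * m), 2 * ζ ^ k / (1 + (ζ ^ k) ^ 2) =
      ∑ t ∈ range (2 * m + 1), (-1) ^ t * (ζ ^ (2 * t + 1)) ^ k := by
    intro k hk
    obtain ⟨hk1, hk2⟩ := mem_Icc.1 hk
    have hk4 := hζ.pow_pow_four_ne_one hodd hk1 (by omega)
    have hsq : -(ζ ^ k) ^ 2 ≠ 1 := fun h => hk4 (by linear_combination (1 - (ζ ^ k) ^ 2) * h)
    have hgeom := geom_sum_eq_two_div_of_pow_eq_neg_one (x := -(ζ ^ k) ^ 2) (n := 2 * m + 1)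
      (by rw [hodd.neg_pow, ← pow_mul, ← pow_mul,
        (hζ.pow_eq_one_iff_dvd _).2 (dvd_mul_of_dvd_right (dvd_mul_left _ _) _)]) hsq
    rw [sub_neg_eq_add] at hgeom
    rw [mul_div_right_comm, ← hgeom, sum_mul]
    refine sum_congr rfl fun t _ => ?_
    rw [neg_pow, ← pow_mul, pow_right_comm, pow_succ, pow_mul]
    ring
  have hinner := hζ.sum_Icc_pow_pow (by omega)
  rw [Nat.add_sub_cancel] at hinner
  have hdvd : ∀ t ∈ range (2 * m + 1), 2 * m + 1 ∣ 2 * t + 1 ↔ t = m := by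
    refine fun t ht => ⟨fun ⟨c, hc⟩ => ?_, fun h => h ▸ dvd_rfl⟩
    have := mem_range.1 ht
    rcases c with _ | _ | c <;> nlinarith
  calc ∑ k ∈ Icc 1 (2 * m), 2 * ζ ^ k / (1 + (ζ ^ k) ^ 2)
      = ∑ t ∈ range (2 * m + 1), (-1) ^ t * ∑ k ∈ Icc 1 (2 * m), (ζ ^ (2 * t + 1)) ^ k := by
        rw [sum_congr rfl hterm, sum_comm]
        simp only [mul_sum]
    _ = ∑ t ∈ range (2 * m + 1), ((if t = m then (-1) ^ t * ((2 * m + 1 : ℕ) : K) else 0)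
          - (-1) ^ t) := by
        refine sum_congr rfl fun t ht => ?_
        rw [hinner]
        simp only [hdvd t ht]
        split_ifs <;> ring
    _ = (-1 : K) ^ m * (2 * m + 1) - 1 := by
        rw [sum_sub_distrib, sum_ite_eq', if_pos (mem_range.2 (by omega)), neg_one_geom_sum,
          if_neg (Nat.not_even_iff_odd.2 hodd)]
        push_cast
        rfl

end Field

theorem Ipq_two_add_two_mul_Ipq_neg_four (m : ℕ) :
    Ipq (2 * m + 1) 2 + 2 * Ipq (2 * m + 1) (-4) = 1 - 2 * m - (-1) ^ m * (2 * m + 1) := by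
  rw [Ipq, Ipq, Nat.add_sub_cancel, mul_sum, ← sum_add_distrib]
  set ζ := mu (2 * m + 1)
  have hζ : IsPrimitiveRoot ζ (2 * m + 1) := Complex.isPrimitiveRoot_exp _ (by omega)
  have hterm : ∀ k ∈ Icc 1 (2 * m),
      (1 + ζ ^ (k : ℤ)) * (1 + ζ ^ ((2 : ℤ) * k)) / ((1 - ζ ^ (k : ℤ)) * (1 - ζ ^ ((2 : ℤ) * k))) +
        2 * ((1 + ζ ^ (k : ℤ)) * (1 + ζ ^ ((-4 : ℤ) * k)) /
          ((1 - ζ ^ (k : ℤ)) * (1 - ζ ^ ((-4 : ℤ) * k)))) =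
      -1 - 2 * ζ ^ k / (1 + (ζ ^ k) ^ 2) := by
    intro k hk
    obtain ⟨hk1, hk2⟩ := mem_Icc.1 hk
    rw [show (2 : ℤ) * k = ((k * 2 : ℕ) : ℤ) by push_cast; ring,
      show (-4 : ℤ) * k = -((k * 4 : ℕ) : ℤ) by push_cast; ring, zpow_neg, zpow_natCast,
      zpow_natCast, zpow_natCast, pow_mul, pow_mul]
    exact pair_term_eq (pow_ne_zero _ (hζ.ne_zero (by omega)))
      (hζ.pow_pow_four_ne_one (odd_two_mul_add_one m) hk1 (by omega))
  rw [sum_congr rfl hterm, sum_sub_distrib, hζ.sum_two_mul_div_one_add_sq, sum_const,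
    Nat.card_Icc]
  simp only [add_tsub_cancel_right, smul_neg, nsmul_eq_mul, Nat.cast_mul, Nat.cast_ofNat, mul_one]
  ring

theorem stmt_15_general (p : ℕ) :
    (∀ r : ℕ, p = 4 * r + 1 → Ipq p 2 + 2 * Ipq p (-4) = -(8 * (r : ℂ))) ∧
    (∀ r : ℕ, p = 4 * r + 3 → Ipq p 2 + 2 * Ipq p (-4) = 2) := by
  constructor
  · rintro r rfl
    rw [show 4 * r + 1 = 2 * (2 * r) + 1 by ring, Ipq_two_add_two_mul_Ipq_neg_four, pow_mul]
    push_cast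
    ring
  · rintro r rfl
    rw [show 4 * r + 3 = 2 * (2 * r + 1) + 1 by ring, Ipq_two_add_two_mul_Ipq_neg_four, pow_succ,
      pow_mul]
    push_cast
    ring

theorem stmt_15 (p : ℕ) (hp : p.Prime) (hp3 : 3 < p) :
    (∀ r : ℕ, p = 4 * r + 1 → Ipq p 2 + 2 * Ipq p (-4) = -(8 * (r : ℂ))) ∧
    (∀ r : ℕ, p = 4 * r + 3 → Ipq p 2 + 2 * Ipq p (-4) = 2) :=
  stmt_15_general p
end
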